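/- Under the embedding γ ↦ γ^↑ of SL₂(ℤ) into Sp(2,ℤ) (acting on the first factor), the Weil representation satisfies ρ_{L,2}(γ^↑) e_{(λ₁,λ₂)} = ρ_{L,1}(γ) e_{λ₁} ⊗ e_{λ₂} for all γ ∈ SL₂(ℤ); similarly ρ_{L,2}(γ^↓) e_{(λ₁,λ₂)} = e_{λ₁} ⊗ ρ_{L,1}(γ) e_{λ₂}. -/

import Mathlib

open Matrix

noncomputable def stmt10e (r : ℚ) : ℂ :=
  Complex.exp (2 * (Real.pi : ℂ) * Complex.I * (r : ℂ))

noncomputable def stmt10S : Matrix.SpecialLinearGroup (Fin 2) ℤ :=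
  ⟨!![0, -1; 1, 0], by simp [Matrix.det_fin_two_of]⟩

noncomputable def stmt10T : Matrix.SpecialLinearGroup (Fin 2) ℤ :=
  ⟨!![1, 1; 0, 1], by simp [Matrix.det_fin_two_of]⟩

/-- The symplectic form matrix for `Sp(2,ℤ)` realized inside `4 × 4` integer matrices. -/
noncomputable def stmt10J : Matrix (Fin 4) (Fin 4) ℤ :=
  !![0, 0, 1, 0; 0, 0, 0, 1; -1, 0, 0, 0; 0, -1, 0, 0]

/-- `Sp(2,ℤ)` as a set of `4 × 4` integer matrices. -/
def stmt10Sp2 : Set (Matrix (Fin 4) (Fin 4) ℤ) :=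
  {g | gᵀ * stmt10J * g = stmt10J}

/-- The generator `S₂` of `Sp(2,ℤ)`. -/
noncomputable def stmt10S2 : Matrix (Fin 4) (Fin 4) ℤ :=
  !![0, 0, -1, 0; 0, 0, 0, -1; 1, 0, 0, 0; 0, 1, 0, 0]

/-- The generator `T₂(m)` of `Sp(2,ℤ)`. -/
noncomputable def stmt10T2 (m : Matrix (Fin 2) (Fin 2) ℤ) : Matrix (Fin 4) (Fin 4) ℤ :=
  !![1, 0, m 0 0, m 0 1; 0, 1, m 1 0, m 1 1; 0, 0, 1, 0; 0, 0, 0, 1]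

/-- The embedding `γ ↦ γ^↑ = l_{1,1}(γ, 1₂)` of `SL₂(ℤ)` into `Sp(2,ℤ)`. -/
noncomputable def stmt10up (γ : Matrix.SpecialLinearGroup (Fin 2) ℤ) :
    Matrix (Fin 4) (Fin 4) ℤ :=
  !![γ 0 0, 0, γ 0 1, 0; 0, 1, 0, 0; γ 1 0, 0, γ 1 1, 0; 0, 0, 0, 1]

/-- The embedding `γ ↦ γ^↓ = l_{1,1}(1₂, γ)` of `SL₂(ℤ)` into `Sp(2,ℤ)`. -/
noncomputable def stmt10down (γ : Matrix.SpecialLinearGroup (Fin 2) ℤ) :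
    Matrix (Fin 4) (Fin 4) ℤ :=
  !![1, 0, 0, 0; 0, γ 0 0, 0, γ 0 1; 0, 0, 1, 0; 0, γ 1 0, 0, γ 1 1]

noncomputable def stmt10tens {A : Type*} (f g : A → ℂ) : A × A → ℂ :=
  fun p => f p.1 * g p.2

open scoped MatrixGroups Kronecker

/-!
The maps `(γ, δ) ↦ ρ_{L,2}(l_{1,1}(γ, δ))` and `(γ, δ) ↦ ρ_{L,1}(γ) ⊗ ρ_{L,1}(δ)` are both
monoid homomorphisms on `SL₂(ℤ) × SL₂(ℤ)`, because `l_{1,1}` is multiplicative with values in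
`Sp(2,ℤ)`. The embedding `l_{1,1}` sends `(S, S)`, `(T, 1)`, `(1, T)` to `S₂`, `T₂(E₁₁)`,
`T₂(E₂₂)`, where the defining formulas show that the two homomorphisms agree. These three
elements generate `SL₂(ℤ) × SL₂(ℤ)`: the relations `S = T⁻¹ S³ T⁻¹ S T⁻¹` and `S⁴ = 1` extract
`(S, 1)` and `(1, S)` from `(S, S)`. So the homomorphisms coincide; finally
`γ^↑ = l_{1,1}(γ, 1)` and `γ^↓ = l_{1,1}(1, γ)`.
-/

section Kronecker
variable {R : Type*} [CommSemiring R] {m n : Type*} [Fintype m] [Fintype n] [DecidableEq m]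
  [DecidableEq n]

noncomputable def kroneckerEnd :
    Module.End R (m → R) × Module.End R (n → R) →* Module.End R (m × n → R) where
  toFun f := Matrix.toLin' (LinearMap.toMatrix' f.1 ⊗ₖ LinearMap.toMatrix' f.2)
  map_one' := by
    simp only [Prod.fst_one, Prod.snd_one, Module.End.one_eq_id, LinearMap.toMatrix'_id,
      one_kronecker_one, Matrix.toLin'_one]
  map_mul' f g := by
    simp only [Prod.fst_mul, Prod.snd_mul, Module.End.mul_eq_comp, LinearMap.toMatrix'_comp,
      mul_kronecker_mul, Matrix.toLin'_mul]

theorem kroneckerEnd_apply_single (f : Module.End R (m → R)) (g : Module.End R (n → R))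
    (i : m) (j : n) (p : m × n) :
    kroneckerEnd (f, g) (Pi.single (i, j) 1) p =
      f (Pi.single i 1) p.1 * g (Pi.single j 1) p.2 := by
  simp [kroneckerEnd, Matrix.toLin'_apply, LinearMap.toMatrix'_apply]

theorem Module.End.ext_single {F G : Module.End R (m → R)}
    (h : ∀ i, F (Pi.single i 1) = G (Pi.single i 1)) : F = G :=
  (Pi.basisFun R m).ext fun i => by simpa using h i

theorem kroneckerEnd_apply_single_of_diagonal {f : Module.End R (m → R)}
    {g : Module.End R (n → R)} {c : m → R} {d : n → R}
    (hf : ∀ i, f (Pi.single i 1) = c i • Pi.single i 1)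
    (hg : ∀ j, g (Pi.single j 1) = d j • Pi.single j 1) (ij : m × n) :
    kroneckerEnd (f, g) (Pi.single ij 1) = (c ij.1 * d ij.2) • Pi.single ij 1 := by
  funext p
  rw [← Prod.mk.eta (p := ij), kroneckerEnd_apply_single, hf, hg]
  simp only [Pi.smul_apply, smul_eq_mul, Pi.single_apply, Prod.ext_iff]
  split_ifs <;> simp_all

theorem smul_sum_single_apply (c : R) (d : m → R) (i : m) :
    (c • ∑ j, d j • (Pi.single j 1 : m → R)) i = c * d i := by
  simp [Finset.sum_apply, Pi.single_apply]

end Kronecker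

def blockEmbedding : SL(2, ℤ) × SL(2, ℤ) →* Matrix (Fin 4) (Fin 4) ℤ where
  toFun x := !![x.1 0 0, 0, x.1 0 1, 0; 0, x.2 0 0, 0, x.2 0 1;
    x.1 1 0, 0, x.1 1 1, 0; 0, x.2 1 0, 0, x.2 1 1]
  map_one' := by
    ext i j; fin_cases i <;> fin_cases j <;> simp
  map_mul' x y := by
    ext i j
    fin_cases i <;> fin_cases j <;>
      simp [Matrix.mul_apply, Fin.sum_univ_four, Fin.sum_univ_two]

theorem Matrix.SpecialLinearGroup.det_fin_two_eq_one (γ : SL(2, ℤ)) :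
    γ 0 0 * γ 1 1 - γ 0 1 * γ 1 0 = 1 := by
  rw [← Matrix.det_fin_two]; exact γ.det_coe

theorem blockEmbedding_mem (x : SL(2, ℤ) × SL(2, ℤ)) : blockEmbedding x ∈ stmt10Sp2 := by
  have h1 := x.1.det_fin_two_eq_one
  have h2 := x.2.det_fin_two_eq_one
  show _ = _
  ext i j
  fin_cases i <;> fin_cases j <;>
    simp [blockEmbedding, stmt10J, Matrix.mul_apply, Fin.sum_univ_four] <;> linarith

theorem blockEmbedding_S_S : blockEmbedding (ModularGroup.S, ModularGroup.S) = stmt10S2 := by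
  ext i j; fin_cases i <;> fin_cases j <;> rfl

theorem blockEmbedding_T_one : blockEmbedding (ModularGroup.T, 1) = stmt10T2 !![1, 0; 0, 0] := by
  ext i j; fin_cases i <;> fin_cases j <;> rfl

theorem blockEmbedding_one_T : blockEmbedding (1, ModularGroup.T) = stmt10T2 !![0, 0; 0, 1] := by
  ext i j; fin_cases i <;> fin_cases j <;> rfl

theorem blockEmbedding_left (γ : SL(2, ℤ)) : blockEmbedding (γ, 1) = stmt10up γ := by
  ext i j; fin_cases i <;> fin_cases j <;> rfl

theorem blockEmbedding_right (γ : SL(2, ℤ)) : blockEmbedding (1, γ) = stmt10down γ := by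
  ext i j; fin_cases i <;> fin_cases j <;> rfl

open ModularGroup in
theorem SL2Z_prod_closure_eq_top :
    Subgroup.closure {(S, S), (T, 1), (1, T)} = (⊤ : Subgroup (SL(2, ℤ) × SL(2, ℤ))) := by
  set H := Subgroup.closure ({(S, S), (T, 1), (1, T)} : Set (SL(2, ℤ) × SL(2, ℤ)))
  have hSS : (S, S) ∈ H := Subgroup.subset_closure (by simp)
  have hT1 : (T, 1) ∈ H := Subgroup.subset_closure (by simp)
  have h1T : (1, T) ∈ H := Subgroup.subset_closure (by simp)
  have hword : ∀ t ∈ H, t⁻¹ * (S, S) ^ 3 * t⁻¹ * (S, S) * t⁻¹ ∈ H := fun t ht =>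
    mul_mem (mul_mem (mul_mem (mul_mem (inv_mem ht) (pow_mem hSS 3)) (inv_mem ht)) hSS)
      (inv_mem ht)
  have hS1 : (S, 1) ∈ H := by
    have hS1_eq : ((S, 1) : SL(2, ℤ) × SL(2, ℤ)) =
        (T, 1)⁻¹ * (S, S) ^ 3 * (T, 1)⁻¹ * (S, S) * (T, 1)⁻¹ := by decide
    exact hS1_eq ▸ hword _ hT1
  have h1S : (1, S) ∈ H := by
    have h1S_eq : ((1, S) : SL(2, ℤ) × SL(2, ℤ)) =
        (1, T)⁻¹ * (S, S) ^ 3 * (1, T)⁻¹ * (S, S) * (1, T)⁻¹ := by decide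
    exact h1S_eq ▸ hword _ h1T
  have hfst : H.comap (MonoidHom.inl _ _) = ⊤ := by
    rw [eq_top_iff, ← SpecialLinearGroup.SL2Z_generators, Subgroup.closure_le]
    rintro _ (rfl | rfl)
    exacts [hS1, hT1]
  have hsnd : H.comap (MonoidHom.inr _ _) = ⊤ := by
    rw [eq_top_iff, ← SpecialLinearGroup.SL2Z_generators, Subgroup.closure_le]
    rintro _ (rfl | rfl)
    exacts [h1S, h1T]
  refine eq_top_iff.2 fun x _ => ?_
  rw [← Prod.fst_mul_snd x]
  exact mul_mem (hfst.ge trivial) (hsnd.ge trivial)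

theorem stmt10e_add (r s : ℚ) : stmt10e (r + s) = stmt10e r * stmt10e s := by
  simp only [stmt10e, ← Complex.exp_add, Rat.cast_add]
  ring_nf

def blockPullback {M : Type*} [Monoid M] (ρ : Matrix (Fin 4) (Fin 4) ℤ → M) (hone : ρ 1 = 1)
    (hmul : ∀ g ∈ stmt10Sp2, ∀ h ∈ stmt10Sp2, ρ (g * h) = ρ g * ρ h) :
    SL(2, ℤ) × SL(2, ℤ) →* M where
  toFun x := ρ (blockEmbedding x)
  map_one' := by rw [map_one, hone]
  map_mul' x y := by rw [map_mul, hmul _ (blockEmbedding_mem x) _ (blockEmbedding_mem y)]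

section Weil
variable {A : Type*} [Fintype A] [DecidableEq A] {ρ1 : SL(2, ℤ) →* Module.End ℂ (A → ℂ)}
  {ρ2 : Matrix (Fin 4) (Fin 4) ℤ → Module.End ℂ (A × A → ℂ)} {sig : ℤ} {q : A → ℚ}
  {b : A → A → ℚ}

theorem weil_T2_eq_kroneckerEnd
    (hT1 : ∀ lam : A, ρ1 stmt10T ((Pi.single lam 1 : A → ℂ)) =
      stmt10e (q lam) • (Pi.single lam 1 : A → ℂ))
    (hT2 : ∀ m : Matrix (Fin 2) (Fin 2) ℤ, mᵀ = m → ∀ lam : A × A,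
      ρ2 (stmt10T2 m) ((Pi.single lam 1 : A × A → ℂ)) =
        stmt10e ((m 0 0 : ℚ) * q lam.1 + (m 1 1 : ℚ) * q lam.2 +
          (m 0 1 : ℚ) * b lam.1 lam.2) • (Pi.single lam 1 : A × A → ℂ)) :
    ρ2 (stmt10T2 !![1, 0; 0, 0]) = kroneckerEnd (ρ1 stmt10T, 1) ∧
    ρ2 (stmt10T2 !![0, 0; 0, 1]) = kroneckerEnd (1, ρ1 stmt10T) := by
  have hid : ∀ lam : A,
      (1 : Module.End ℂ (A → ℂ)) (Pi.single lam 1) = (1 : ℂ) • Pi.single lam 1 :=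
    fun lam => (one_smul ℂ _).symm
  constructor <;> refine Module.End.ext_single fun lam => ?_
  · rw [hT2 _ (by decide), kroneckerEnd_apply_single_of_diagonal hT1 hid]
    simp
  · rw [hT2 _ (by decide), kroneckerEnd_apply_single_of_diagonal hid hT1]
    simp

theorem weil_S2_eq_kroneckerEnd
    (hS1 : ∀ lam : A, ρ1 stmt10S ((Pi.single lam 1 : A → ℂ)) =
      (stmt10e (-(sig : ℚ) / 8) / (Real.sqrt (Fintype.card A) : ℂ)) •
        ∑ μ : A, stmt10e (-(b μ lam)) • (Pi.single μ 1 : A → ℂ))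
    (hS2 : ∀ lam : A × A, ρ2 stmt10S2 ((Pi.single lam 1 : A × A → ℂ)) =
      (stmt10e (-(2 * sig : ℚ) / 8) / (Fintype.card A : ℂ)) •
        ∑ μ : A × A, stmt10e (-(b μ.1 lam.1 + b μ.2 lam.2)) •
          (Pi.single μ 1 : A × A → ℂ)) :
    ρ2 stmt10S2 = kroneckerEnd (ρ1 stmt10S, ρ1 stmt10S) := by
  have hcard : ((Real.sqrt (Fintype.card A) : ℝ) : ℂ) ^ 2 = Fintype.card A := by
    rw [← Complex.ofReal_pow, Real.sq_sqrt (Nat.cast_nonneg _), Complex.ofReal_natCast]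
  refine Module.End.ext_single fun lam => funext fun p => ?_
  rw [← Prod.mk.eta (p := lam), kroneckerEnd_apply_single, hS1, hS1, hS2, smul_sum_single_apply,
    smul_sum_single_apply, smul_sum_single_apply, ← hcard, neg_add, stmt10e_add,
    show -(2 * sig : ℚ) / 8 = -sig / 8 + -sig / 8 by ring, stmt10e_add]
  ring

theorem blockPullback_eq_kroneckerEnd
    (hT1 : ∀ lam : A, ρ1 stmt10T ((Pi.single lam 1 : A → ℂ)) =
      stmt10e (q lam) • (Pi.single lam 1 : A → ℂ))
    (hS1 : ∀ lam : A, ρ1 stmt10S ((Pi.single lam 1 : A → ℂ)) =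
      (stmt10e (-(sig : ℚ) / 8) / (Real.sqrt (Fintype.card A) : ℂ)) •
        ∑ μ : A, stmt10e (-(b μ lam)) • (Pi.single μ 1 : A → ℂ))
    (hone : ρ2 1 = 1)
    (hmul : ∀ g ∈ stmt10Sp2, ∀ h ∈ stmt10Sp2, ρ2 (g * h) = ρ2 g * ρ2 h)
    (hT2 : ∀ m : Matrix (Fin 2) (Fin 2) ℤ, mᵀ = m → ∀ lam : A × A,
      ρ2 (stmt10T2 m) ((Pi.single lam 1 : A × A → ℂ)) =
        stmt10e ((m 0 0 : ℚ) * q lam.1 + (m 1 1 : ℚ) * q lam.2 +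
          (m 0 1 : ℚ) * b lam.1 lam.2) • (Pi.single lam 1 : A × A → ℂ))
    (hS2 : ∀ lam : A × A, ρ2 stmt10S2 ((Pi.single lam 1 : A × A → ℂ)) =
      (stmt10e (-(2 * sig : ℚ) / 8) / (Fintype.card A : ℂ)) •
        ∑ μ : A × A, stmt10e (-(b μ.1 lam.1 + b μ.2 lam.2)) •
          (Pi.single μ 1 : A × A → ℂ)) :
    blockPullback ρ2 hone hmul = kroneckerEnd.comp (ρ1.prodMap ρ1) := by
  obtain ⟨hTleft, hTright⟩ := weil_T2_eq_kroneckerEnd (ρ1 := ρ1) hT1 hT2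
  refine MonoidHom.eq_of_eqOn_dense SL2Z_prod_closure_eq_top ?_
  rintro _ (rfl | rfl | rfl)
  · show ρ2 (blockEmbedding _) = kroneckerEnd (ρ1 stmt10S, ρ1 stmt10S)
    rw [blockEmbedding_S_S, weil_S2_eq_kroneckerEnd hS1 hS2]
  · show ρ2 (blockEmbedding _) = kroneckerEnd (ρ1 stmt10T, ρ1 1)
    rw [blockEmbedding_T_one, hTleft, map_one]
  · show ρ2 (blockEmbedding _) = kroneckerEnd (ρ1 1, ρ1 stmt10T)
    rw [blockEmbedding_one_T, hTright, map_one]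

end Weil

theorem stmt10_general {A : Type*} [Fintype A] [DecidableEq A]
    (sig : ℤ) (q : A → ℚ) (b : A → A → ℚ)
    (ρ1 : Matrix.SpecialLinearGroup (Fin 2) ℤ →* ((A → ℂ) →ₗ[ℂ] (A → ℂ)))
    (ρ2 : Matrix (Fin 4) (Fin 4) ℤ → ((A × A → ℂ) →ₗ[ℂ] (A × A → ℂ)))
    (hT1 : ∀ lam : A, ρ1 stmt10T ((Pi.single lam 1 : A → ℂ)) =
      stmt10e (q lam) • (Pi.single lam 1 : A → ℂ))
    (hS1 : ∀ lam : A, ρ1 stmt10S ((Pi.single lam 1 : A → ℂ)) =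
      (stmt10e (-(sig : ℚ) / 8) / (Real.sqrt (Fintype.card A) : ℂ)) •
        ∑ μ : A, stmt10e (-(b μ lam)) • (Pi.single μ 1 : A → ℂ))
    (hone : ρ2 1 = 1)
    (hmul : ∀ g ∈ stmt10Sp2, ∀ h ∈ stmt10Sp2, ρ2 (g * h) = ρ2 g * ρ2 h)
    (hT2 : ∀ m : Matrix (Fin 2) (Fin 2) ℤ, mᵀ = m → ∀ lam : A × A,
      ρ2 (stmt10T2 m) ((Pi.single lam 1 : A × A → ℂ)) =
        stmt10e ((m 0 0 : ℚ) * q lam.1 + (m 1 1 : ℚ) * q lam.2 +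
          (m 0 1 : ℚ) * b lam.1 lam.2) • (Pi.single lam 1 : A × A → ℂ))
    (hS2 : ∀ lam : A × A, ρ2 stmt10S2 ((Pi.single lam 1 : A × A → ℂ)) =
      (stmt10e (-(2 * sig : ℚ) / 8) / (Fintype.card A : ℂ)) •
        ∑ μ : A × A, stmt10e (-(b μ.1 lam.1 + b μ.2 lam.2)) •
          (Pi.single μ 1 : A × A → ℂ))
    (γ : Matrix.SpecialLinearGroup (Fin 2) ℤ) (lam₁ lam₂ : A) :
    ρ2 (stmt10up γ) ((Pi.single (lam₁, lam₂) 1 : A × A → ℂ)) =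
      stmt10tens (ρ1 γ (Pi.single lam₁ 1 : A → ℂ)) (Pi.single lam₂ 1 : A → ℂ) ∧
    ρ2 (stmt10down γ) ((Pi.single (lam₁, lam₂) 1 : A × A → ℂ)) =
      stmt10tens (Pi.single lam₁ 1 : A → ℂ) (ρ1 γ (Pi.single lam₂ 1 : A → ℂ)) := by
  have hρ := blockPullback_eq_kroneckerEnd hT1 hS1 hone hmul hT2 hS2
  have hup : ρ2 (stmt10up γ) = kroneckerEnd (ρ1 γ, 1) := by
    simpa [blockPullback, blockEmbedding_left] using DFunLike.congr_fun hρ (γ, 1)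
  have hdown : ρ2 (stmt10down γ) = kroneckerEnd (1, ρ1 γ) := by
    simpa [blockPullback, blockEmbedding_right] using DFunLike.congr_fun hρ (1, γ)
  constructor <;> funext p
  · rw [hup, kroneckerEnd_apply_single]; rfl
  · rw [hdown, kroneckerEnd_apply_single]; rfl

/-- For the Weil representations `ρ_{L,1}` and `ρ_{L,2}` (given on the generators by the
standard formulas, with `ρ_{L,2}` multiplicative on `Sp(2,ℤ)`) one has
`ρ_{L,2}(γ^↑) e_{(λ₁,λ₂)} = ρ_{L,1}(γ) e_{λ₁} ⊗ e_{λ₂}` and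
`ρ_{L,2}(γ^↓) e_{(λ₁,λ₂)} = e_{λ₁} ⊗ ρ_{L,1}(γ) e_{λ₂}` for all `γ ∈ SL₂(ℤ)`. -/
theorem stmt10 {A : Type*} [AddCommGroup A] [Fintype A] [DecidableEq A]
    (sig : ℤ) (q : A → ℚ) (b : A → A → ℚ)
    (hbsymm : ∀ x y, b x y = b y x)
    (hbq : ∀ x y, stmt10e (q (x + y)) = stmt10e (q x) * stmt10e (q y) * stmt10e (b x y))
    (hMilgram : (∑ lam : A, stmt10e (q lam)) =
      (Real.sqrt (Fintype.card A) : ℂ) * stmt10e ((sig : ℚ) / 8))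
    (ρ1 : Matrix.SpecialLinearGroup (Fin 2) ℤ →* ((A → ℂ) →ₗ[ℂ] (A → ℂ)))
    (ρ2 : Matrix (Fin 4) (Fin 4) ℤ → ((A × A → ℂ) →ₗ[ℂ] (A × A → ℂ)))
    (hT1 : ∀ lam : A, ρ1 stmt10T ((Pi.single lam 1 : A → ℂ)) =
      stmt10e (q lam) • (Pi.single lam 1 : A → ℂ))
    (hS1 : ∀ lam : A, ρ1 stmt10S ((Pi.single lam 1 : A → ℂ)) =
      (stmt10e (-(sig : ℚ) / 8) / (Real.sqrt (Fintype.card A) : ℂ)) •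
        ∑ μ : A, stmt10e (-(b μ lam)) • (Pi.single μ 1 : A → ℂ))
    (hone : ρ2 1 = 1)
    (hmul : ∀ g ∈ stmt10Sp2, ∀ h ∈ stmt10Sp2, ρ2 (g * h) = ρ2 g * ρ2 h)
    (hT2 : ∀ m : Matrix (Fin 2) (Fin 2) ℤ, mᵀ = m → ∀ lam : A × A,
      ρ2 (stmt10T2 m) ((Pi.single lam 1 : A × A → ℂ)) =
        stmt10e ((m 0 0 : ℚ) * q lam.1 + (m 1 1 : ℚ) * q lam.2 +
          (m 0 1 : ℚ) * b lam.1 lam.2) • (Pi.single lam 1 : A × A → ℂ))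
    (hS2 : ∀ lam : A × A, ρ2 stmt10S2 ((Pi.single lam 1 : A × A → ℂ)) =
      (stmt10e (-(2 * sig : ℚ) / 8) / (Fintype.card A : ℂ)) •
        ∑ μ : A × A, stmt10e (-(b μ.1 lam.1 + b μ.2 lam.2)) •
          (Pi.single μ 1 : A × A → ℂ))
    (γ : Matrix.SpecialLinearGroup (Fin 2) ℤ) (lam₁ lam₂ : A) :
    ρ2 (stmt10up γ) ((Pi.single (lam₁, lam₂) 1 : A × A → ℂ)) =
      stmt10tens (ρ1 γ (Pi.single lam₁ 1 : A → ℂ)) (Pi.single lam₂ 1 : A → ℂ) ∧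
    ρ2 (stmt10down γ) ((Pi.single (lam₁, lam₂) 1 : A × A → ℂ)) =
      stmt10tens (Pi.single lam₁ 1 : A → ℂ) (ρ1 γ (Pi.single lam₂ 1 : A → ℂ)) :=
  stmt10_general sig q b ρ1 ρ2 hT1 hS1 hone hmul hT2 hS2 γ lam₁ lam₂
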